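/- arXiv:0909.0613 — 6 statements merged into one kernel-verified Lean document; each statement's English description precedes it below -/
import Mathlib

section
/- Let ρ, σ², λ ∈ ℝ with |ρ| < 1, σ² > 0 and λ > 0, and define the 3 × 3 real symmetric matrix I_∞ with entries: I_∞(1,1) = 1/(1−ρ²) + λ/(1−ρ)², I_∞(1,2) = I_∞(2,1) = λ/(2σ²(1−ρ)), I_∞(1,3) = I_∞(3,1) = 1/(2(1−ρ)), I_∞(2,2) = (2+λ)/(4(σ²)²), I_∞(2,3) = I_∞(3,2) = 1/(4σ²), and I_∞(3,3) = 1/(4λ). Then I_∞ is invertible and the (1,1) entry of its inverse equals 1 − ρ². -/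
/-!
By Cramer's rule, `(I_∞⁻¹)₁₁` is the minor of the `(σ², λ)` block divided by `det I_∞`.
That minor is `1 / (8 σ⁴ λ)`, free of `ρ`, while `det I_∞ = 1 / (8 σ⁴ λ (1 - ρ²))`.
-/

open Matrix

noncomputable def panelInfoMatrix (ρ σ2 lam : ℝ) : Matrix (Fin 3) (Fin 3) ℝ :=
  !![1 / (1 - ρ ^ 2) + lam / (1 - ρ) ^ 2, lam / (2 * σ2 * (1 - ρ)), 1 / (2 * (1 - ρ));
     lam / (2 * σ2 * (1 - ρ)), (2 + lam) / (4 * σ2 ^ 2), 1 / (4 * σ2);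
     1 / (2 * (1 - ρ)), 1 / (4 * σ2), 1 / (4 * lam)]

/-- Cramer's rule for the `(0, 0)` entry; both sides are `0` when `A` is singular. -/
theorem Matrix.inv_apply_zero_zero_fin_three {K : Type*} [Field K]
    (A : Matrix (Fin 3) (Fin 3) K) :
    A⁻¹ 0 0 = (A 1 1 * A 2 2 - A 1 2 * A 2 1) / A.det := by
  rw [inv_def, smul_apply, smul_eq_mul, Ring.inverse_eq_inv', adjugate_fin_three]
  simp only [of_apply, cons_val', cons_val_zero, empty_val', cons_val_fin_one]
  ring

section panelInfoMatrix

variable {ρ σ2 lam : ℝ}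

theorem det_panelInfoMatrix (hρ₁ : 1 - ρ ≠ 0) (hρ₂ : 1 + ρ ≠ 0) (hσ2 : σ2 ≠ 0) (hlam : lam ≠ 0) :
    (panelInfoMatrix ρ σ2 lam).det = 1 / (8 * σ2 ^ 2 * lam * (1 - ρ ^ 2)) := by
  rw [panelInfoMatrix, det_fin_three]
  simp only [of_apply, cons_val', cons_val_zero, cons_val_one, cons_val_two, empty_val',
    cons_val_fin_one, head_cons, head_fin_const, tail_cons]
  rw [show (1 : ℝ) - ρ ^ 2 = (1 - ρ) * (1 + ρ) by ring]
  field_simp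
  ring

theorem panelInfoMatrix_minor_zero_zero (hσ2 : σ2 ≠ 0) (hlam : lam ≠ 0) :
    panelInfoMatrix ρ σ2 lam 1 1 * panelInfoMatrix ρ σ2 lam 2 2
      - panelInfoMatrix ρ σ2 lam 1 2 * panelInfoMatrix ρ σ2 lam 2 1 = 1 / (8 * σ2 ^ 2 * lam) := by
  simp only [panelInfoMatrix, of_apply, cons_val', cons_val_zero, cons_val_one, cons_val_two,
    empty_val', cons_val_fin_one, head_cons, head_fin_const, tail_cons]
  field_simp
  ring

end panelInfoMatrix

/-- The `(1,1)` entry of the inverse of the limiting information matrix `I_∞(θ*)` in the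
dynamic panel data model equals the Hahn–Kuersteiner bound `1 - ρ²`. -/
theorem panel_info_inverse_entry (ρ σ2 lam : ℝ) (hρ : |ρ| < 1) (hσ2 : 0 < σ2)
    (hlam : 0 < lam) (Iinf : Matrix (Fin 3) (Fin 3) ℝ)
    (hI : Iinf =
      !![1 / (1 - ρ ^ 2) + lam / (1 - ρ) ^ 2, lam / (2 * σ2 * (1 - ρ)), 1 / (2 * (1 - ρ));
         lam / (2 * σ2 * (1 - ρ)), (2 + lam) / (4 * σ2 ^ 2), 1 / (4 * σ2);
         1 / (2 * (1 - ρ)), 1 / (4 * σ2), 1 / (4 * lam)]) :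
    IsUnit Iinf ∧ Iinf⁻¹ 0 0 = 1 - ρ ^ 2 := by
  replace hI : Iinf = panelInfoMatrix ρ σ2 lam := hI
  subst hI
  obtain ⟨hρ_lo, hρ_hi⟩ := abs_lt.mp hρ
  have hρ₁ : 1 - ρ ≠ 0 := by linarith
  have hρ₂ : 1 + ρ ≠ 0 := by linarith
  have hρsq : 1 - ρ ^ 2 ≠ 0 := by nlinarith
  have hdet := det_panelInfoMatrix hρ₁ hρ₂ hσ2.ne' hlam.ne'
  refine ⟨(isUnit_iff_isUnit_det _).mpr (isUnit_iff_ne_zero.mpr ?_), ?_⟩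
  · rw [hdet]
    positivity
  · rw [inv_apply_zero_zero_fin_three, panelInfoMatrix_minor_zero_zero hσ2.ne' hlam.ne', hdet]
    field_simp
end

section
/- Let Σ be a symmetric positive definite 2 × 2 real matrix, β* ∈ ℝ, λ* > 0 and α ≥ 0. Write a* = (β*, 1)ᵀ, b = (1, −β*)ᵀ, e₁ = (1, 0)ᵀ, q = a*ᵀΣ⁻¹a*, r = a*ᵀΣ⁻¹e₁, s = e₁ᵀΣ⁻¹e₁, σ_u² = bᵀΣb, and define the 2 × 2 symmetric matrix I_α with entries I_α(1,1) = λ*² · (q·s·(α + 2λ*q) + α·r²) / ((α + λ*q)(α + 2λ*q)), I_α(1,2) = I_α(2,1) = λ* · r · q / (α + 2λ*q), and I_α(2,2) = q² / (2(α + 2λ*q)). Then I_α is invertible and the (1,1) entry of its inverse equals (σ_u²/λ*²) · (λ* + α/q). -/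
/-!
Write `g = q s - r²`. Expanding the 2 × 2 inverse, `(I_α⁻¹)₁₁ = I_α(2,2) / det I_α`, and the
determinant collapses to `λ*² q² g / (2 (α + λ* q)(α + 2 λ* q))`, so that
`(I_α⁻¹)₁₁ = (α + λ* q) / (λ*² g)`. Two facts about 2 × 2 quadratic forms finish the proof:
`g` is the Gram determinant of `a*, e₁` for `Σ⁻¹`, hence
`g = det Σ⁻¹ · det[a* e₁]² = 1 / det Σ`; and `b` is `a*` rotated by a right angle, so
`bᵀ Σ b = a*ᵀ (adj Σ) a* = det Σ · q`.
-/

open Matrix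

namespace Matrix

variable {R : Type*}

theorem dotProduct_mulVec_fin_two [CommRing R] (M : Matrix (Fin 2) (Fin 2) R) (a b c d : R) :
    ![a, b] ⬝ᵥ M *ᵥ ![c, d] =
      M 0 0 * a * c + M 0 1 * a * d + M 1 0 * b * c + M 1 1 * b * d := by
  simp only [dotProduct, mulVec, Fin.sum_univ_two, cons_val_zero, cons_val_one, cons_val_fin_one]
  ring

theorem IsSymm.gram_det_fin_two [CommRing R] {M : Matrix (Fin 2) (Fin 2) R} (hM : M.IsSymm)
    (a b c d : R) :
    (![a, b] ⬝ᵥ M *ᵥ ![a, b]) * (![c, d] ⬝ᵥ M *ᵥ ![c, d]) -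
        (![a, b] ⬝ᵥ M *ᵥ ![c, d]) ^ 2 = M.det * (a * d - b * c) ^ 2 := by
  simp only [dotProduct_mulVec_fin_two, det_fin_two, hM.apply 0 1]
  ring

theorem dotProduct_mulVec_rotate_fin_two [Field R] {M : Matrix (Fin 2) (Fin 2) R}
    (hM : M.det ≠ 0) (a b : R) :
    ![b, -a] ⬝ᵥ M *ᵥ ![b, -a] = M.det * (![a, b] ⬝ᵥ M⁻¹ *ᵥ ![a, b]) := by
  rw [inv_def, adjugate_fin_two, Ring.inverse_eq_inv', smul_mulVec, dotProduct_smul,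
    smul_eq_mul, mul_inv_cancel_left₀ hM]
  simp only [dotProduct_mulVec_fin_two, of_apply, cons_val', cons_val_zero, cons_val_one,
    cons_val_fin_one]
  ring

theorem inv_apply_zero_zero_fin_two [Field R] (A : Matrix (Fin 2) (Fin 2) R) :
    A⁻¹ 0 0 = A 1 1 / A.det := by
  rw [inv_def, adjugate_fin_two, Ring.inverse_eq_inv']
  simp [div_eq_inv_mul]

end Matrix

noncomputable def ivInfoMatrix (lam α q r s : ℝ) : Matrix (Fin 2) (Fin 2) ℝ :=
  !![lam ^ 2 * (q * s * (α + 2 * lam * q) + α * r ^ 2) / ((α + lam * q) * (α + 2 * lam * q)),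
     lam * r * q / (α + 2 * lam * q);
     lam * r * q / (α + 2 * lam * q),
     q ^ 2 / (2 * (α + 2 * lam * q))]

section ivInfoMatrix

variable {lam α q r s : ℝ}

theorem det_ivInfoMatrix (hA : α + lam * q ≠ 0) (hB : α + 2 * lam * q ≠ 0) :
    (ivInfoMatrix lam α q r s).det =
      lam ^ 2 * q ^ 2 * (q * s - r ^ 2) / (2 * (α + lam * q) * (α + 2 * lam * q)) := by
  rw [ivInfoMatrix, det_fin_two_of, div_mul_div_comm, div_mul_div_comm,
    div_sub_div _ _ (by simp [hA, hB]) (by simp [hB]),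
    div_eq_div_iff (by simp [hA, hB]) (by simp [hA, hB])]
  ring

theorem ivInfoMatrix_inv_zero_zero (hlam : lam ≠ 0) (hq : q ≠ 0) (hg : q * s - r ^ 2 ≠ 0)
    (hA : α + lam * q ≠ 0) (hB : α + 2 * lam * q ≠ 0) :
    (ivInfoMatrix lam α q r s)⁻¹ 0 0 = (α + lam * q) / (lam ^ 2 * (q * s - r ^ 2)) := by
  rw [inv_apply_zero_zero_fin_two, det_ivInfoMatrix hA hB]
  simp only [ivInfoMatrix, of_apply, cons_val_one, cons_val_zero]
  rw [div_div_div_eq, div_eq_div_iff (by simp [hlam, hq, hg, hB]) (by simp [hlam, hg])]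
  ring

end ivInfoMatrix

/-- The `(1,1)` entry of the inverse of the limiting information matrix `I_α(θ*)` in the
IV model equals `(σ_u²/λ*²)(λ* + α/q)`, the asymptotic variance of LIMLK. -/
theorem iv_info_inverse_entry (S : Matrix (Fin 2) (Fin 2) ℝ) (hS : S.PosDef)
    (βs lams α : ℝ) (hlams : 0 < lams) (hα : 0 ≤ α)
    (q r s σu2 : ℝ)
    (hq : q = ![βs, 1] ⬝ᵥ S⁻¹.mulVec ![βs, 1])
    (hr : r = ![βs, 1] ⬝ᵥ S⁻¹.mulVec ![(1 : ℝ), 0])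
    (hs : s = ![(1 : ℝ), 0] ⬝ᵥ S⁻¹.mulVec ![(1 : ℝ), 0])
    (hσu2 : σu2 = ![(1 : ℝ), -βs] ⬝ᵥ S.mulVec ![(1 : ℝ), -βs])
    (Iα : Matrix (Fin 2) (Fin 2) ℝ)
    (hI : Iα =
      !![lams ^ 2 * (q * s * (α + 2 * lams * q) + α * r ^ 2) /
           ((α + lams * q) * (α + 2 * lams * q)),
         lams * r * q / (α + 2 * lams * q);
         lams * r * q / (α + 2 * lams * q),
         q ^ 2 / (2 * (α + 2 * lams * q))]) :
    IsUnit Iα ∧ Iα⁻¹ 0 0 = σu2 / lams ^ 2 * (lams + α / q) := by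
  have hdet : 0 < S.det := hS.det_pos
  have hqpos : 0 < q := hq ▸ hS.inv.dotProduct_mulVec_pos fun h => one_ne_zero (congrFun h 1)
  have hgram : q * s - r ^ 2 = S.det⁻¹ := by
    rw [hq, hr, hs, IsSymm.gram_det_fin_two (isHermitian_iff_isSymm.1 hS.isHermitian.inv),
      det_nonsing_inv, Ring.inverse_eq_inv']
    norm_num
  have hσ : σu2 = S.det * q := hσu2 ▸ hq ▸ dotProduct_mulVec_rotate_fin_two hdet.ne' βs 1
  have hA : 0 < α + lams * q := by positivity
  have hB : 0 < α + 2 * lams * q := by positivity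
  change Iα = ivInfoMatrix lams α q r s at hI
  subst hI
  refine ⟨(isUnit_iff_isUnit_det _).2 (isUnit_iff_ne_zero.2 ?_), ?_⟩
  · rw [det_ivInfoMatrix hA.ne' hB.ne', hgram]
    positivity
  · have hg : q * s - r ^ 2 ≠ 0 := hgram ▸ inv_ne_zero hdet.ne'
    rw [ivInfoMatrix_inv_zero_zero hlams.ne' hqpos.ne' hg hA.ne' hB.ne', hgram, hσ]
    field_simp
    ring
end

section
/- Let Σ be a symmetric positive definite 2 × 2 real matrix, β* ∈ ℝ and λ* > 0, and write a(β) = (β, 1)ᵀ and a* = a(β*). Define Q̄ : ℝ × [0, ∞) → ℝ by Q̄(β, λ) = −(1/2)·λ·a(β)ᵀΣ⁻¹a(β) + √λ·√λ*·a*ᵀΣ⁻¹a(β). Then Q̄ attains its maximum over ℝ × [0,∞) at (β*, λ*), with maximal value (1/2)·λ*·a*ᵀΣ⁻¹a*, and (β*, λ*) is the unique maximizer: Q̄(β, λ) < Q̄(β*, λ*) for every (β, λ) ≠ (β*, λ*) with λ ≥ 0. -/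
open Matrix

/-!
Completing the square gives `Q̄(β*, λ*) - Q̄(β, λ) = ½ ‖√λ · a(β) - √λ* · a*‖²`, where
`‖x‖² = xᵀ Σ⁻¹ x` is positive definite. So the gap vanishes only when
`√λ · a(β) = √λ* · a*`; the second coordinates of `a(β) = (β, 1)` force `λ = λ*`, and then
`β = β*` because `λ* > 0`.
-/

namespace Matrix

variable {n R : Type*} [Fintype n] [CommRing R]

theorem IsSymm.dotProduct_mulVec_comm {M : Matrix n n R} (hM : M.IsSymm) (x y : n → R) :
    x ⬝ᵥ M *ᵥ y = y ⬝ᵥ M *ᵥ x := by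
  rw [dotProduct_mulVec, ← mulVec_transpose, hM.eq, dotProduct_comm]

theorem IsSymm.dotProduct_mulVec_smul_sub_smul {M : Matrix n n R} (hM : M.IsSymm)
    (x y : n → R) (s t : R) :
    (s • x - t • y) ⬝ᵥ M *ᵥ (s • x - t • y) =
      s ^ 2 * (x ⬝ᵥ M *ᵥ x) - 2 * s * t * (y ⬝ᵥ M *ᵥ x) + t ^ 2 * (y ⬝ᵥ M *ᵥ y) := by
  simp only [mulVec_sub, mulVec_smul, sub_dotProduct, dotProduct_sub, smul_dotProduct,
    dotProduct_smul, smul_eq_mul, hM.dotProduct_mulVec_comm x y]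
  ring

end Matrix

theorem smul_pair_one_eq_smul_pair_one_iff {R : Type*} [CommRing R] [IsDomain R]
    {s t β β' : R} (ht : t ≠ 0) :
    s • ![β, 1] = t • ![β', 1] ↔ s = t ∧ β = β' := by
  constructor
  · intro h
    have hst : s = t := by simpa using congrFun h 1
    refine ⟨hst, mul_left_cancel₀ ht ?_⟩
    simpa [hst] using congrFun h 0
  · rintro ⟨rfl, rfl⟩
    rfl

/-- The limiting objective function of the invariant likelihood in the IV model under
strong-instrument asymptotics is uniquely maximized over `ℝ × [0, ∞)` at the true
parameter `(β*, λ*)`, with maximal value `(1/2)·λ*·a*ᵀΣ⁻¹a*`. -/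
theorem iv_limit_objective_unique_max (S : Matrix (Fin 2) (Fin 2) ℝ) (hS : S.PosDef)
    (βs lams : ℝ) (hlams : 0 < lams)
    (Qbar : ℝ → ℝ → ℝ)
    (hQ : ∀ β lam, Qbar β lam =
      -(1 / 2) * lam * (![β, 1] ⬝ᵥ S⁻¹.mulVec ![β, 1]) +
        Real.sqrt lam * Real.sqrt lams * (![βs, 1] ⬝ᵥ S⁻¹.mulVec ![β, 1])) :
    Qbar βs lams = 1 / 2 * lams * (![βs, 1] ⬝ᵥ S⁻¹.mulVec ![βs, 1]) ∧
      ∀ β lam, 0 ≤ lam → (β, lam) ≠ (βs, lams) → Qbar β lam < Qbar βs lams := by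
  have hsq : Real.sqrt lams ^ 2 = lams := Real.sq_sqrt hlams.le
  have hmax : Qbar βs lams = 1 / 2 * lams * (![βs, 1] ⬝ᵥ S⁻¹.mulVec ![βs, 1]) := by
    rw [hQ, ← sq, hsq]
    ring
  refine ⟨hmax, fun β lam hlam hne => ?_⟩
  set v := Real.sqrt lam • ![β, 1] - Real.sqrt lams • ![βs, 1]
  have hgap : Qbar βs lams - Qbar β lam = 1 / 2 * (v ⬝ᵥ S⁻¹ *ᵥ v) := by
    have hsymm : S⁻¹.IsSymm := isHermitian_iff_isSymm.mp hS.inv.isHermitian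
    rw [hmax, hQ, hsymm.dotProduct_mulVec_smul_sub_smul, Real.sq_sqrt hlam, hsq]
    ring
  have hv : v ≠ 0 := by
    rw [Ne, sub_eq_zero, smul_pair_one_eq_smul_pair_one_iff (Real.sqrt_pos.mpr hlams).ne',
      Real.sqrt_inj hlam hlams.le]
    exact fun ⟨hl, hb⟩ => hne (by rw [hl, hb])
  have hpos : 0 < v ⬝ᵥ S⁻¹ *ᵥ v := by
    simpa only [star_trivial] using hS.inv.dotProduct_mulVec_pos hv
  linarith
end

section
/- Let Σ be a symmetric positive definite 2 × 2 real matrix, β* ∈ ℝ, λ* > 0 and α > 0. Write a(β) = (β, 1)ᵀ, a* = a(β*), q(β) = a(β)ᵀΣ⁻¹a(β), p(β) = a*ᵀΣ⁻¹a(β), and define Q̄ : ℝ × (0, ∞) → ℝ by Q̄(β, λ) = −(1/2)·λ·q(β) + (α/2)·(1 + Z(β,λ)²/α²)^{1/2} − (α/2)·ln(1 + (1 + Z(β,λ)²/α²)^{1/2}), where Z(β,λ)² = 4λ·(α·q(β) + λ*·p(β)²). Then Q̄ is differentiable at (β*, λ*) and both partial derivatives of Q̄ vanish there: ∂Q̄/∂β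 (β*, λ*) = 0 and ∂Q̄/∂λ (β*, λ*) = 0. -/
/-!
Write `u = λ q(β)` and `w = 1 + Z²/α²`, so that `Q̄ = -u/2 + (α/2) φ(w)` with
`φ w = √w - log (1 + √w)` and `φ' w = 1 / (2 (1 + √w))`. At the true parameter `p(β*) = q(β*) = q*`,
and symmetry of `Σ⁻¹` gives `q'(β*) = 2 p'(β*)`; hence the differential of `λ p(β)²` is `q*` times
that of `u`, and `dw = 4 (α + λ* q*) / α² · du`. Since `w = ((α + 2λ* q*)/α)²` there,
`(α/2) φ'(w) · 4 (α + λ* q*) / α² = 1/2`, which cancels the `-u/2` term exactly.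
-/

open Matrix ContinuousLinearMap Filter Topology

theorem vecCons_one_dotProduct_mulVec_vecCons_one {R : Type*} [CommRing R]
    {M : Matrix (Fin 2) (Fin 2) R} (hM : M.IsSymm) (x y : R) :
    ![x, 1] ⬝ᵥ M *ᵥ ![y, 1] = M 0 0 * x * y + M 0 1 * (x + y) + M 1 1 := by
  simp only [dotProduct, mulVec, Fin.sum_univ_two, Matrix.cons_val_zero, Matrix.cons_val_one,
    hM.apply 0 1]
  ring

theorem hasDerivAt_vecCons_one_dotProduct_mulVec_vecCons_one {M : Matrix (Fin 2) (Fin 2) ℝ}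
    (hM : M.IsSymm) (x y : ℝ) :
    HasDerivAt (fun t => ![x, 1] ⬝ᵥ M *ᵥ ![t, 1]) (M 0 0 * x + M 0 1) y := by
  simp_rw [vecCons_one_dotProduct_mulVec_vecCons_one hM]
  simpa using (((hasDerivAt_id y).const_mul (M 0 0 * x)).add
    (((hasDerivAt_id y).const_add x).const_mul (M 0 1))).add_const (M 1 1)

theorem hasDerivAt_vecCons_one_dotProduct_mulVec_self {M : Matrix (Fin 2) (Fin 2) ℝ}
    (hM : M.IsSymm) (x : ℝ) :
    HasDerivAt (fun t => ![t, 1] ⬝ᵥ M *ᵥ ![t, 1]) (2 * (M 0 0 * x + M 0 1)) x := by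
  simp_rw [vecCons_one_dotProduct_mulVec_vecCons_one hM]
  refine (((((hasDerivAt_id' x).const_mul (M 0 0)).mul (hasDerivAt_id' x)).add
    (((hasDerivAt_id' x).add (hasDerivAt_id' x)).const_mul (M 0 1))).add_const (M 1 1)).congr_deriv
    (by ring)

theorem HasDerivAt.hasFDerivAt_snd_mul_comp_fst {f : ℝ → ℝ} {f' x : ℝ} (hf : HasDerivAt f f' x)
    (y : ℝ) :
    HasFDerivAt (fun z : ℝ × ℝ => z.2 * f z.1) (f x • snd ℝ ℝ ℝ + (y * f') • fst ℝ ℝ ℝ) (x, y) := by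
  refine (hasFDerivAt_snd.mul (hf.comp_hasFDerivAt (x, y) hasFDerivAt_fst)).congr_fderiv ?_
  ext <;> simp [mul_comm]

theorem hasDerivAt_sqrt_sub_log_one_add_sqrt {w : ℝ} (hw : 0 < w) :
    HasDerivAt (fun w => √w - Real.log (1 + √w)) (1 / (2 * (1 + √w))) w := by
  have hsqrt := Real.hasDerivAt_sqrt hw.ne'
  have hpos : 0 < √w := Real.sqrt_pos.mpr hw
  refine (hsqrt.sub ((hsqrt.const_add 1).log (by positivity))).congr_deriv ?_
  field_simp
  ring

-- `Q̄(β, λ)` is `limitObjective α λ* λ (q β) (p β)`.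
noncomputable def limitObjective (α lams lam q p : ℝ) : ℝ :=
  -(1 / 2) * lam * q + α / 2 * Real.sqrt (1 + 4 * lam * (α * q + lams * p ^ 2) / α ^ 2) -
    α / 2 * Real.log (1 + Real.sqrt (1 + 4 * lam * (α * q + lams * p ^ 2) / α ^ 2))

section TrueParameter

variable {q p : ℝ → ℝ} {β₀ lam₀ α d : ℝ}

theorem hasFDerivAt_one_add_mul_div_sq (hq : HasDerivAt q (2 * d) β₀) (hp : HasDerivAt p d β₀)
    (hpq : p β₀ = q β₀) :
    HasFDerivAt (fun x : ℝ × ℝ => 1 + 4 * x.2 * (α * q x.1 + lam₀ * p x.1 ^ 2) / α ^ 2)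
      ((4 * (α + lam₀ * q β₀) / α ^ 2) •
        (q β₀ • snd ℝ ℝ ℝ + (lam₀ * (2 * d)) • fst ℝ ℝ ℝ)) (β₀, lam₀) := by
  have hu := hq.hasFDerivAt_snd_mul_comp_fst lam₀
  have hv : HasFDerivAt (fun x : ℝ × ℝ => x.2 * p x.1 ^ 2)
      (q β₀ • (q β₀ • snd ℝ ℝ ℝ + (lam₀ * (2 * d)) • fst ℝ ℝ ℝ)) (β₀, lam₀) := by
    refine ((hp.pow 2).hasFDerivAt_snd_mul_comp_fst lam₀).congr_fderiv ?_
    rw [Pi.pow_apply, hpq]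
    module
  have := (((hu.const_mul α).add (hv.const_mul lam₀)).const_mul (4 / α ^ 2)).const_add 1
  refine (this.congr_fderiv ?_).congr_of_eventuallyEq (Eventually.of_forall fun x => ?_)
  · module
  · simp only [Pi.add_apply]
    ring

theorem hasFDerivAt_limitObjective_eq_zero (hq : HasDerivAt q (2 * d) β₀)
    (hp : HasDerivAt p d β₀) (hpq : p β₀ = q β₀) (hq₀ : 0 ≤ q β₀) (hlam₀ : 0 ≤ lam₀)
    (hα : 0 < α) :
    HasFDerivAt (fun x : ℝ × ℝ => limitObjective α lam₀ x.2 (q x.1) (p x.1))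
      (0 : ℝ × ℝ →L[ℝ] ℝ) (β₀, lam₀) := by
  set r := (α + 2 * lam₀ * q β₀) / α with hr_def
  have hr : 0 < r := by positivity
  have hw₀ : 1 + 4 * lam₀ * (α * q β₀ + lam₀ * p β₀ ^ 2) / α ^ 2 = r ^ 2 := by
    rw [hpq, hr_def]
    field_simp
    ring
  have hφ := hasDerivAt_sqrt_sub_log_one_add_sqrt (pow_pos hr 2)
  rw [Real.sqrt_sq hr.le] at hφ
  have hcancel : -(1 / 2) + α / 2 * (1 / (2 * (1 + r))) * (4 * (α + lam₀ * q β₀) / α ^ 2) = 0 := by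
    rw [hr_def]
    field_simp
    ring
  have := ((hq.hasFDerivAt_snd_mul_comp_fst lam₀).const_mul (-(1 / 2))).add
    ((hφ.comp_hasFDerivAt_of_eq _ (hasFDerivAt_one_add_mul_div_sq hq hp hpq) hw₀.symm).const_mul
      (α / 2))
  refine (this.congr_fderiv ?_).congr_of_eventuallyEq (Eventually.of_forall fun x => ?_)
  · rw [smul_smul, smul_smul, ← add_smul, ← mul_assoc, hcancel, zero_smul]
  · simp only [limitObjective, Pi.add_apply, Function.comp_apply]
    ring

end TrueParameter

/-- The limiting objective function of the invariant likelihood in the IV model under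
many-weak-instrument asymptotics `K/N → α > 0` is differentiable at the true parameter
`(β*, λ*)` and both of its partial derivatives vanish there (first-order conditions). -/
theorem iv_mwiv_limit_objective_foc (S : Matrix (Fin 2) (Fin 2) ℝ) (hS : S.PosDef)
    (βs lams α : ℝ) (hlams : 0 < lams) (hα : 0 < α)
    (Qbar : ℝ → ℝ → ℝ)
    (hQ : ∀ β lam, 0 < lam → Qbar β lam =
      -(1 / 2) * lam * (![β, 1] ⬝ᵥ S⁻¹.mulVec ![β, 1]) +
        α / 2 * Real.sqrt (1 +
          4 * lam * (α * (![β, 1] ⬝ᵥ S⁻¹.mulVec ![β, 1]) +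
            lams * (![βs, 1] ⬝ᵥ S⁻¹.mulVec ![β, 1]) ^ 2) / α ^ 2) -
        α / 2 * Real.log (1 + Real.sqrt (1 +
          4 * lam * (α * (![β, 1] ⬝ᵥ S⁻¹.mulVec ![β, 1]) +
            lams * (![βs, 1] ⬝ᵥ S⁻¹.mulVec ![β, 1]) ^ 2) / α ^ 2))) :
    HasFDerivAt (fun p : ℝ × ℝ => Qbar p.1 p.2)
      (0 : ℝ × ℝ →L[ℝ] ℝ) (βs, lams) := by
  have hM : S⁻¹.IsSymm := by
    simpa [conjTranspose_eq_transpose_of_trivial] using hS.inv.isHermitian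
  have hq₀ : 0 < ![βs, 1] ⬝ᵥ S⁻¹ *ᵥ ![βs, 1] := by
    simpa using hS.inv.dotProduct_mulVec_pos (x := ![βs, 1]) (by simp)
  have hQbar : (fun x : ℝ × ℝ => limitObjective α lams x.2 (![x.1, 1] ⬝ᵥ S⁻¹ *ᵥ ![x.1, 1])
      (![βs, 1] ⬝ᵥ S⁻¹ *ᵥ ![x.1, 1])) =ᶠ[𝓝 (βs, lams)] fun x => Qbar x.1 x.2 :=
    (continuous_snd.tendsto _ |>.eventually (eventually_gt_nhds hlams)).mono
      fun x hx => (hQ x.1 x.2 hx).symm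
  exact (hasFDerivAt_limitObjective_eq_zero (hasDerivAt_vecCons_one_dotProduct_mulVec_self hM βs)
    (hasDerivAt_vecCons_one_dotProduct_mulVec_vecCons_one hM βs βs) rfl hq₀.le hlams.le
    hα).congr_of_eventuallyEq hQbar.symm
end

section
/- Let T ≥ 2 and for ρ ∈ ℝ let B(ρ) be the T × T lower-triangular matrix with (i,j) entry ρ^{i−j} for i ≥ j and 0 for i < j. Let ρ, ρ* ∈ ℝ, σ², σ*² > 0 and λ, λ* ≥ 0. Then σ² · B(ρ)(I_T + λ·1_T 1_Tᵀ)B(ρ)ᵀ = σ*² · B(ρ*)(I_T + λ*·1_T 1_Tᵀ)B(ρ*)ᵀ (equality of T × T matrices) if and only if ρ = ρ*, σ² = σ*² and λ = λ*. -/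
/-!
Only the top-left `2 × 2` block of the mean matrix is needed. Writing `s = σ²` and `q = σ²λ`,
its entries are `m₀₀ = s + q`, `m₁₀ = (s + q)ρ + q` and `m₁₁ = (s + q)ρ² + 2qρ + s + q`, so for
every `r` the combination `m₁₁ - 2r m₁₀ + (r² - 1) m₀₀` equals `(ρ - r)((s + q)(ρ - r) + 2q)`.
Since this vanishes at `r = ρ`, equal blocks make it vanish for `(ρ, s, q)` at `r = ρ*` and for
`(ρ*, s*, q*)` at `r = ρ`; as `s + q > 0` and `q ≥ 0`, this forces `ρ - ρ* ≤ 0` and `ρ* - ρ ≤ 0`.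
Once `ρ = ρ*`, `q` and then `s` are read off `m₁₀` and `m₀₀`.
-/

open Matrix

theorem Matrix.mul_one_add_smul_vecMulVec_mul_transpose {m n R : Type*} [Fintype n]
    [DecidableEq n] [CommRing R] (A B : Matrix m n R) (c : R) (u v : n → R) :
    A * (1 + c • vecMulVec u v) * Bᵀ = A * Bᵀ + c • vecMulVec (A *ᵥ u) (B *ᵥ v) := by
  rw [Matrix.mul_add, Matrix.mul_one, Matrix.add_mul, Matrix.mul_smul, Matrix.smul_mul,
    mul_vecMulVec, vecMulVec_mul, vecMul_transpose]

theorem nonpos_of_mul_mul_add_eq_zero {K : Type*} [CommRing K] [LinearOrder K]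
    [IsStrictOrderedRing K] {x a b : K} (ha : 0 < a) (hb : 0 ≤ b) (h : x * (a * x + b) = 0) :
    x ≤ 0 := by
  rcases mul_eq_zero.1 h with hx | hx
  · exact hx.le
  · nlinarith

def powToeplitz {R : Type*} [Semiring R] (T : ℕ) (ρ : R) : Matrix (Fin T) (Fin T) R :=
  of fun i j => if (j : ℕ) ≤ (i : ℕ) then ρ ^ ((i : ℕ) - (j : ℕ)) else 0

section powToeplitz

variable {R : Type*} [CommRing R] (n : ℕ) (ρ : R)

theorem powToeplitz_row_zero : powToeplitz (n + 2) ρ 0 = Pi.single 0 1 := by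
  funext k
  rcases k with ⟨_ | k, hk⟩ <;> simp [powToeplitz, Fin.ext_iff, -Fin.val_fin_le]

theorem powToeplitz_row_one : powToeplitz (n + 2) ρ 1 = Pi.single 0 ρ + Pi.single 1 1 := by
  funext k
  rcases k with ⟨_ | _ | k, hk⟩ <;> simp [powToeplitz, Fin.ext_iff, -Fin.val_fin_le]

theorem powToeplitz_mul_transpose_zero_zero :
    (powToeplitz (n + 2) ρ * (powToeplitz (n + 2) ρ)ᵀ) 0 0 = 1 := by
  simp [mul_apply_eq_vecMul, vecMul_transpose, mulVec, powToeplitz_row_zero]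

theorem powToeplitz_mul_transpose_one_zero :
    (powToeplitz (n + 2) ρ * (powToeplitz (n + 2) ρ)ᵀ) 1 0 = ρ := by
  simp [mul_apply_eq_vecMul, vecMul_transpose, mulVec, powToeplitz_row_zero, powToeplitz_row_one]

theorem powToeplitz_mul_transpose_one_one :
    (powToeplitz (n + 2) ρ * (powToeplitz (n + 2) ρ)ᵀ) 1 1 = ρ ^ 2 + 1 := by
  simp [mul_apply_eq_vecMul, vecMul_transpose, mulVec, powToeplitz_row_one, dotProduct_add, sq]

theorem powToeplitz_mulVec_one_zero : (powToeplitz (n + 2) ρ *ᵥ 1) 0 = 1 := by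
  simp [mulVec, dotProduct_one, powToeplitz_row_zero]

theorem powToeplitz_mulVec_one_one : (powToeplitz (n + 2) ρ *ᵥ 1) 1 = ρ + 1 := by
  simp [mulVec, dotProduct_one, powToeplitz_row_one, Finset.sum_add_distrib]

end powToeplitz

theorem eq_of_panel_moments_eq {K : Type*} [Field K] [LinearOrder K] [IsStrictOrderedRing K]
    {ρ ρs σ2 σ2s lam lams : K} (hσ2 : 0 < σ2) (hσ2s : 0 < σ2s) (hlam : 0 ≤ lam) (hlams : 0 ≤ lams)
    (h00 : σ2 * (1 + lam) = σ2s * (1 + lams))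
    (h10 : σ2 * (ρ + lam * (ρ + 1)) = σ2s * (ρs + lams * (ρs + 1)))
    (h11 : σ2 * (ρ ^ 2 + 1 + lam * (ρ + 1) ^ 2) = σ2s * (ρs ^ 2 + 1 + lams * (ρs + 1) ^ 2)) :
    ρ = ρs ∧ σ2 = σ2s ∧ lam = lams := by
  have hle : ρ - ρs ≤ 0 := by
    refine nonpos_of_mul_mul_add_eq_zero (a := σ2 * (1 + lam)) (b := 2 * (σ2 * lam))
      (by positivity) (by positivity) ?_
    linear_combination h11 - 2 * ρs * h10 + (ρs ^ 2 - 1) * h00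
  have hge : ρs - ρ ≤ 0 := by
    refine nonpos_of_mul_mul_add_eq_zero (a := σ2s * (1 + lams)) (b := 2 * (σ2s * lams))
      (by positivity) (by positivity) ?_
    linear_combination -h11 + 2 * ρ * h10 + (1 - ρ ^ 2) * h00
  obtain rfl : ρ = ρs := by linarith
  have hq : σ2 * lam = σ2s * lams := by linear_combination h10 - ρ * h00
  obtain rfl : σ2 = σ2s := by linear_combination h00 - hq
  exact ⟨rfl, rfl, mul_left_cancel₀ hσ2.ne' hq⟩

/-- Moment identification in the dynamic panel data model: the mean
`σ²·B(ρ)(I_T + λ·1_T1_Tᵀ)B(ρ)ᵀ` of the maximal invariant determines `(ρ, σ², λ)`. -/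
theorem panel_moment_identification (T : ℕ) (hT : 2 ≤ T)
    (B : ℝ → Matrix (Fin T) (Fin T) ℝ)
    (hB : ∀ (ρ : ℝ) (i j : Fin T), B ρ i j =
      if (j : ℕ) ≤ (i : ℕ) then ρ ^ ((i : ℕ) - (j : ℕ)) else 0)
    (ρ ρs σ2 σ2s lam lams : ℝ) (hσ2 : 0 < σ2) (hσ2s : 0 < σ2s)
    (hlam : 0 ≤ lam) (hlams : 0 ≤ lams) :
    σ2 • (B ρ * (1 + lam • vecMulVec (fun _ => (1 : ℝ)) (fun _ => (1 : ℝ))) * (B ρ)ᵀ) =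
      σ2s • (B ρs * (1 + lams • vecMulVec (fun _ => (1 : ℝ)) (fun _ => (1 : ℝ))) * (B ρs)ᵀ) ↔
      ρ = ρs ∧ σ2 = σ2s ∧ lam = lams := by
  obtain ⟨n, rfl⟩ : ∃ n, T = n + 2 := ⟨T - 2, by omega⟩
  obtain rfl : B = powToeplitz (n + 2) := funext fun ρ => Matrix.ext (hB ρ)
  simp only [← Pi.one_def, mul_one_add_smul_vecMulVec_mul_transpose]
  refine ⟨fun h => ?_, by rintro ⟨rfl, rfl, rfl⟩; rfl⟩
  have entry (i j : Fin (n + 2)) := congrFun₂ h i j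
  simp only [Matrix.smul_apply, Matrix.add_apply, vecMulVec_apply, smul_eq_mul] at entry
  refine eq_of_panel_moments_eq hσ2 hσ2s hlam hlams ?_ ?_ ?_
  · simpa [powToeplitz_mul_transpose_zero_zero, powToeplitz_mulVec_one_zero] using entry 0 0
  · simpa [powToeplitz_mul_transpose_one_zero, powToeplitz_mulVec_one_zero,
      powToeplitz_mulVec_one_one] using entry 1 0
  · simpa [powToeplitz_mul_transpose_one_one, powToeplitz_mulVec_one_one, sq] using entry 1 1
end

section
/- Fix an integer T ≥ 1. For N > T define c_N = (1/(NT)) · ln( 2^{(N−2)/2} · N^{NT/2 − (N−2)/2} / ( 2^{NT/2 − (N−2)/2} · π^{T(T−1)/4} · ∏_{t=1}^{T−1} Γ((N − t)/2) ) ), where Γ denotes the Gamma function and the product over t is empty (equal to 1) when T = 1. Then c_N → ln(2)/(2T) + (T−1)/(2T) as N → ∞. -/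
/-!
Stirling's formula in the weak form `log Γ(y) = y log y - y + O(log y)` carries the whole
argument. For `y ≥ 2` and `n = ⌊y⌋` the monotonicity of `Γ` on `[2, ∞)` gives
`n! / y ≤ Γ(y) ≤ n!`, and `log n! = n log n - n + O(log n)`. Consequently
`log Γ((N - t)/2) = (N/2) log N - N (1 + log 2)/2 + o(N)`, and in `log` of the normalizing
constant the `T - 1` terms `(N/2) log N` cancel the power of `N` up to `log N`.
-/

open Filter Real Topology
open scoped Nat

lemma mul_log_sub_self_sub_le {a b : ℝ} (ha : 0 < a) (hab : a ≤ b) :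
    (b * log b - b) - (a * log a - a) ≤ (b - a) * log b := by
  have hb : 0 < b := ha.trans_le hab
  have h := log_le_sub_one_of_pos (div_pos hb ha)
  rw [log_div hb.ne' ha.ne'] at h
  have : a * (log b - log a) ≤ b - a := by
    calc a * (log b - log a) ≤ a * (b / a - 1) := mul_le_mul_of_nonneg_left h ha.le
      _ = b - a := by field_simp
  linarith

lemma sub_mul_log_le_mul_log_sub_self_sub {a b : ℝ} (ha : 0 < a) (hab : a ≤ b) :
    (b - a) * log a ≤ (b * log b - b) - (a * log a - a) := by
  have hb : 0 < b := ha.trans_le hab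
  have h := one_sub_inv_le_log_of_pos (div_pos hb ha)
  rw [log_div hb.ne' ha.ne', inv_div] at h
  have : b - a ≤ b * (log b - log a) := by
    calc b - a = b * (1 - a / b) := by field_simp
      _ ≤ b * (log b - log a) := mul_le_mul_of_nonneg_left h hb.le
  linarith

lemma mul_log_sub_self_le_log_factorial {n : ℕ} (hn : n ≠ 0) : (n : ℝ) * log n - n ≤ log n ! := by
  have h := Stirling.le_log_factorial_stirling hn
  have hlog_n : 0 ≤ log n := log_natCast_nonneg n
  have hlog_two_pi : 0 ≤ log (2 * π) := log_nonneg (by linarith [pi_gt_three])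
  linarith

/-- `stirlingSeq` decreases from `stirlingSeq 1 = e / √2`. -/
lemma log_factorial_le {n : ℕ} (hn : n ≠ 0) : log n ! ≤ (n : ℝ) * log n - n + log n / 2 + 1 := by
  obtain ⟨m, rfl⟩ := Nat.exists_eq_add_one_of_ne_zero hn
  have h := Stirling.log_stirlingSeq'_antitone (Nat.zero_le m)
  simp only [Function.comp_apply, Stirling.stirlingSeq_one] at h
  rw [Stirling.log_stirlingSeq_formula, log_div (exp_pos 1).ne' (by positivity), log_exp,
    log_sqrt zero_le_two, log_div (by positivity) (exp_pos 1).ne', log_exp,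
    log_mul two_ne_zero (by positivity)] at h
  linarith

lemma abs_log_Gamma_sub_le {y : ℝ} (hy : 2 ≤ y) :
    |log (Gamma y) - (y * log y - y)| ≤ 2 * log y + 1 := by
  set n := ⌊y⌋₊
  have hn : 2 ≤ n := Nat.le_floor (by exact_mod_cast hy)
  have hn0 : (0 : ℝ) < n := by positivity
  have hny : (n : ℝ) ≤ y := Nat.floor_le (by linarith)
  have hyn : y < n + 1 := Nat.lt_floor_add_one y
  have hn2 : (2 : ℝ) ≤ n := by exact_mod_cast hn
  have hΓ_le : Gamma y ≤ n ! := by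
    rw [← Gamma_nat_eq_factorial]
    exact Gamma_strictMonoOn_Ici.monotoneOn hy (by simp; linarith) hyn.le
  have hΓ_ge : (n ! : ℝ) ≤ y * Gamma y := by
    rw [← Gamma_nat_eq_factorial, ← Gamma_add_one (by positivity)]
    exact Gamma_strictMonoOn_Ici.monotoneOn (by simp; linarith) (by simp; linarith)
      (by linarith)
  have hΓ_pos : 0 < Gamma y := Gamma_pos_of_pos (by positivity)
  have hlog_le : log (Gamma y) ≤ log n ! := log_le_log hΓ_pos hΓ_le
  have hlog_ge : log n ! ≤ log y + log (Gamma y) := by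
    rw [← log_mul (by positivity) hΓ_pos.ne']
    exact log_le_log (by positivity) hΓ_ge
  have hmvt_le := mul_log_sub_self_sub_le hn0 hny
  have hmvt_ge := sub_mul_log_le_mul_log_sub_self_sub hn0 hny
  have hlog_n : 0 ≤ log (n : ℝ) := log_nonneg (by linarith)
  have hlog_ny : log (n : ℝ) ≤ log y := log_le_log hn0 hny
  have hlog_y : 0 ≤ log y := hlog_n.trans hlog_ny
  have hfac_ge := mul_log_sub_self_le_log_factorial (n := n) (by omega)
  have hfac_le := log_factorial_le (n := n) (by omega)
  have hgap : (y - n) * log y ≤ log y := by nlinarith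
  have hrise : 0 ≤ (y - n) * log n := mul_nonneg (by linarith) hlog_n
  rw [abs_le]
  constructor <;> linarith

lemma tendsto_log_div_self_atTop : Tendsto (fun x => log x / x) atTop (𝓝 0) := by
  simpa using tendsto_pow_log_div_mul_add_atTop 1 0 1 one_ne_zero

theorem tendsto_log_Gamma_div_sub_log :
    Tendsto (fun y => log (Gamma y) / y - log y) atTop (𝓝 (-1)) := by
  have hbound : Tendsto (fun y => (2 * log y + 1) / y) atTop (𝓝 0) := by
    have h := (tendsto_log_div_self_atTop.const_mul 2).add tendsto_inv_atTop_zero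
    rw [mul_zero, add_zero] at h
    refine h.congr' ?_
    filter_upwards [eventually_gt_atTop 0] with y hy
    field_simp
  have herr : Tendsto (fun y => (log (Gamma y) - (y * log y - y)) / y) atTop (𝓝 0) := by
    refine squeeze_zero_norm' ?_ hbound
    filter_upwards [eventually_ge_atTop 2] with y hy
    rw [norm_div, Real.norm_of_nonneg (by linarith : (0 : ℝ) ≤ y)]
    exact div_le_div_of_nonneg_right (abs_log_Gamma_sub_le hy) (by linarith)
  rw [← zero_sub]
  refine (herr.sub_const 1).congr' ?_
  filter_upwards [eventually_gt_atTop 0] with y hy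
  field_simp
  ring

theorem tendsto_log_Gamma_mul_add_div_sub {c : ℝ} (hc : 0 < c) (d : ℝ) :
    Tendsto (fun x => log (Gamma (c * x + d)) / x - c * log x) atTop (𝓝 (c * log c - c)) := by
  have hy : Tendsto (fun x => c * x + d) atTop atTop :=
    tendsto_atTop_add_const_right _ d (tendsto_id.const_mul_atTop hc)
  have hratio : Tendsto (fun x => (c * x + d) / x) atTop (𝓝 c) := by
    have h := (tendsto_inv_atTop_zero (𝕜 := ℝ)).const_mul d |>.const_add c
    rw [mul_zero, add_zero] at h
    refine h.congr' ?_
    filter_upwards [eventually_gt_atTop 0] with x hx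
    field_simp
  have h := ((hratio.mul (tendsto_log_Gamma_div_sub_log.comp hy)).add
    (hratio.mul (hratio.log hc.ne'))).add (tendsto_log_div_self_atTop.const_mul d)
  rw [mul_zero, add_zero, mul_neg_one, neg_add_eq_sub] at h
  refine h.congr' ?_
  filter_upwards [eventually_gt_atTop (max 0 (-d / c))] with x hx
  have hx0 : 0 < x := (le_max_left _ _).trans_lt hx
  have hyx : 0 < c * x + d := by
    have := (le_max_right _ _).trans_lt hx
    rw [div_lt_iff₀ hc] at this
    linarith
  simp only [Function.comp_apply]
  rw [log_div hyx.ne' hx0.ne']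
  field_simp
  ring

theorem tendsto_sum_log_Gamma_sub_div_two {ι : Type*} (s : Finset ι) (a : ι → ℝ) :
    Tendsto (fun N : ℕ => ∑ i ∈ s, (log (Gamma (((N : ℝ) - a i) / 2)) / N - log N / 2)) atTop
      (𝓝 (s.card * (-(log 2 + 1) / 2))) := by
  have h := tendsto_finsetSum s fun i _ =>
    (tendsto_log_Gamma_mul_add_div_sub one_half_pos (-a i / 2)).comp
      tendsto_natCast_atTop_atTop
  have hlim : (1 / 2 : ℝ) * log (1 / 2) - 1 / 2 = -(log 2 + 1) / 2 := by
    rw [one_div, log_inv]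
    ring
  rw [Finset.sum_const, hlim, nsmul_eq_mul] at h
  refine h.congr fun N => Finset.sum_congr rfl fun i _ => ?_
  simp only [Function.comp_apply]
  ring_nf

lemma log_two_rpow_mul_rpow_div {x : ℝ} (hx : 0 < x) (a e b : ℝ) {ι : Type*} (s : Finset ι)
    (g : ι → ℝ) (hg : ∀ i ∈ s, 0 < g i) :
    log (2 ^ a * x ^ e / (2 ^ e * π ^ b * ∏ i ∈ s, g i)) =
      (a - e) * log 2 + e * log x - b * log π - ∑ i ∈ s, log (g i) := by
  have hprod : 0 < ∏ i ∈ s, g i := Finset.prod_pos hg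
  rw [log_div (by positivity) (by positivity), log_mul (by positivity) (by positivity),
    log_mul (by positivity) hprod.ne', log_mul (by positivity) (by positivity),
    log_rpow two_pos, log_rpow hx, log_rpow two_pos, log_rpow pi_pos,
    log_prod fun i hi => (hg i hi).ne']
  ring

/-- The normalizing term of the invariant log-likelihood in the dynamic panel data
model converges, as `N → ∞` with `T` fixed, to `ln(2)/(2T) + (T-1)/(2T)`. -/
theorem panel_normalizing_limit (T : ℕ) (hT : 1 ≤ T) :
    Tendsto
      (fun N : ℕ => (1 / ((N : ℝ) * (T : ℝ))) *
        Real.log ((2 : ℝ) ^ (((N : ℝ) - 2) / 2) *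
            (N : ℝ) ^ ((N : ℝ) * (T : ℝ) / 2 - ((N : ℝ) - 2) / 2) /
          ((2 : ℝ) ^ ((N : ℝ) * (T : ℝ) / 2 - ((N : ℝ) - 2) / 2) *
            Real.pi ^ ((T : ℝ) * ((T : ℝ) - 1) / 4) *
            ∏ t ∈ Finset.Icc 1 (T - 1), Real.Gamma (((N : ℝ) - (t : ℝ)) / 2))))
      atTop (nhds (Real.log 2 / (2 * (T : ℝ)) + ((T : ℝ) - 1) / (2 * (T : ℝ)))) := by
  obtain ⟨m, rfl⟩ : ∃ m, T = m + 1 := ⟨T - 1, by omega⟩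
  have hsum := tendsto_sum_log_Gamma_sub_div_two (Finset.Icc 1 m) (fun t => (t : ℝ))
  rw [Nat.card_Icc, Nat.add_sub_cancel] at hsum
  have hinv : Tendsto (fun N : ℕ => (N : ℝ)⁻¹) atTop (𝓝 0) :=
    tendsto_inv_atTop_zero.comp tendsto_natCast_atTop_atTop
  have hlog : Tendsto (fun N : ℕ => log N / N) atTop (𝓝 0) :=
    tendsto_log_div_self_atTop.comp tendsto_natCast_atTop_atTop
  -- The power of `N` in front is `N^((T - 1) N / 2 + 1)`: against the `T - 1` terms `log N / 2`
  -- subtracted in `hsum` only `log N / N` survives.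
  have h := (((hinv.const_mul (-2)).const_add (1 - ((m : ℝ) + 1) / 2)).mul_const (log 2) |>.add
    hlog |>.sub ((hinv.const_mul (((m : ℝ) + 1) * m / 4)).mul_const (log π)) |>.sub
    hsum).const_mul ((m : ℝ) + 1)⁻¹
  convert h.congr' ?_ using 2
  · push_cast
    field_simp
    ring
  filter_upwards [eventually_ge_atTop (m + 1)] with N hN
  have hN : (m : ℝ) + 1 ≤ N := by exact_mod_cast hN
  have hN0 : (N : ℝ) ≠ 0 := (by positivity : (0 : ℝ) < m + 1).trans_le hN |>.ne'
  have hΓ : ∀ t ∈ Finset.Icc 1 m, 0 < Gamma (((N : ℝ) - t) / 2) := fun t ht => by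
    have : (t : ℝ) ≤ m := by exact_mod_cast (Finset.mem_Icc.1 ht).2
    exact Gamma_pos_of_pos (by linarith)
  simp only [Nat.add_sub_cancel]
  rw [log_two_rpow_mul_rpow_div (by linarith) _ _ _ _ _ hΓ, Finset.sum_sub_distrib,
    ← Finset.sum_div, Finset.sum_const, Nat.card_Icc, Nat.add_sub_cancel, nsmul_eq_mul]
  push_cast
  field_simp
  ring
end
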